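/- Let a ≤ b be real numbers and q a real polynomial of even degree k that is nonnegative outside (a, b). Then q can be written as a finite positive linear combination of polynomials of the form N(q̃) with q̃ ∈ ℂ_{k/2}[x] and (x - a)(x - b)·N(q̃) with q̃ ∈ ℂ_{k/2 - 1}[x]. -/

import Mathlib

/-!
Peel off real quadratic factors one at a time. A non-real root `z` gives the factor
`N(X - z)`; a real root outside `[a, b]` cannot be a sign change, so it is a double root and gives
`N(X - r)`; a real root `r ∈ [a, b]` is paired, by the intermediate value theorem, with a second
root `s ∈ [a, b]`, and `(X - r)(X - s)` is a nonnegative combination of `(X - a)²`,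
`(X - a)(X - b)` and `(X - b)²`. By continuity the cofactor is again nonnegative outside `(a, b)`.
The admissible combinations form cones graded by half the degree, and these cones multiply, since
`N` is multiplicative and `N((X - a)(X - b)) = ((X - a)(X - b))²`.
-/

open Polynomial Finset

/-- `N(q) = q ⬝ q*`, where `q*` has conjugated coefficients. -/
noncomputable def Nq (q : Polynomial ℂ) : Polynomial ℂ := q * q.map (starRingEnd ℂ)

open Filter Topology
open scoped Pointwise

noncomputable def intervalWeight (a b : ℝ) : ℂ[X] := (X - C (a : ℂ)) * (X - C (b : ℂ))

/-- The bound `f.natDegree + 1 ≤ n` rather than `f.natDegree ≤ n - 1` keeps the weighted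
summands out of degree zero. -/
def sosGenerators (a b : ℝ) (n : ℕ) : Set ℂ[X] :=
  {P | ∃ f : ℂ[X], (f.natDegree ≤ n ∧ P = Nq f) ∨
    (f.natDegree + 1 ≤ n ∧ P = intervalWeight a b * Nq f)}

noncomputable def sosCone (a b : ℝ) (n : ℕ) : AddSubmonoid ℂ[X] :=
  AddSubmonoid.closure (sosGenerators a b n)

def NonnegOutside (a b : ℝ) (q : ℝ[X]) : Prop :=
  ∀ x ∉ Set.Icc a b, 0 ≤ q.eval x

def IsAdmissibleQuadratic (a b : ℝ) (p : ℝ[X]) : Prop :=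
  p.natDegree = 2 ∧ p.map (algebraMap ℝ ℂ) ∈ sosCone a b 1 ∧ NonnegOutside a b p

lemma Nq_mul (f g : ℂ[X]) : Nq (f * g) = Nq f * Nq g := by
  simp only [Nq, Polynomial.map_mul]; ring

lemma Nq_X_sub_C_ofReal (r : ℝ) : Nq (X - C (r : ℂ)) = (X - C (r : ℂ)) ^ 2 := by
  simp [Nq, sq]

lemma Nq_C_ofReal (c : ℝ) : Nq (C (c : ℂ)) = C ((c ^ 2 : ℝ) : ℂ) := by
  simp [Nq, sq]

lemma Nq_intervalWeight (a b : ℝ) : Nq (intervalWeight a b) = intervalWeight a b ^ 2 := by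
  rw [intervalWeight, Nq_mul, Nq_X_sub_C_ofReal, Nq_X_sub_C_ofReal]; ring

lemma natDegree_intervalWeight_le (a b : ℝ) : (intervalWeight a b).natDegree ≤ 2 :=
  natDegree_mul_le.trans (add_le_add (natDegree_X_sub_C_le _) (natDegree_X_sub_C_le _))

section sosCone

variable {a b : ℝ} {m n : ℕ}

lemma sosGenerators_mul_subset (a b : ℝ) (m n : ℕ) :
    sosGenerators a b m * sosGenerators a b n ⊆ sosGenerators a b (m + n) := by
  rintro _ ⟨P, ⟨f, hf⟩, Q, ⟨g, hg⟩, rfl⟩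
  have hfg := natDegree_mul_le (p := f) (q := g)
  rcases hf with ⟨hf, rfl⟩ | ⟨hf, rfl⟩ <;> rcases hg with ⟨hg, rfl⟩ | ⟨hg, rfl⟩
  · exact ⟨f * g, .inl ⟨by omega, (Nq_mul f g).symm⟩⟩
  · exact ⟨f * g, .inr ⟨by omega, by rw [Nq_mul]; ring⟩⟩
  · exact ⟨f * g, .inr ⟨by omega, by rw [Nq_mul]; ring⟩⟩
  · have hW := natDegree_intervalWeight_le a b
    have hWfg := natDegree_mul_le (p := intervalWeight a b) (q := f * g)
    exact ⟨intervalWeight a b * (f * g),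
      .inl ⟨by omega, by rw [Nq_mul, Nq_mul, Nq_intervalWeight]; ring⟩⟩

lemma sosCone_mul_mem {P Q : ℂ[X]} (hP : P ∈ sosCone a b m) (hQ : Q ∈ sosCone a b n) :
    P * Q ∈ sosCone a b (m + n) := by
  have hPQ := AddSubmonoid.mul_mem_mul hP hQ
  rw [sosCone, sosCone, AddSubmonoid.closure_mul_closure] at hPQ
  exact AddSubmonoid.closure_mono (sosGenerators_mul_subset a b m n) hPQ

lemma Nq_mem_sosCone {f : ℂ[X]} (hf : f.natDegree ≤ n) : Nq f ∈ sosCone a b n :=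
  AddSubmonoid.subset_closure ⟨f, .inl ⟨hf, rfl⟩⟩

lemma intervalWeight_mem_sosCone (a b : ℝ) : intervalWeight a b ∈ sosCone a b 1 :=
  AddSubmonoid.subset_closure ⟨1, .inr ⟨by simp, by simp [Nq]⟩⟩

lemma C_ofReal_mem_sosCone {c : ℝ} (hc : 0 ≤ c) : C (c : ℂ) ∈ sosCone a b n := by
  have := Nq_mem_sosCone (a := a) (b := b) ((natDegree_C (√c : ℂ)).trans_le n.zero_le)
  rwa [Nq_C_ofReal, Real.sq_sqrt hc] at this

lemma C_ofReal_mul_mem_sosCone {c : ℝ} (hc : 0 ≤ c) {P : ℂ[X]} (hP : P ∈ sosCone a b n) :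
    C (c : ℂ) * P ∈ sosCone a b n := by
  simpa using sosCone_mul_mem (C_ofReal_mem_sosCone (n := 0) hc) hP

lemma X_sub_C_ofReal_sq_mem_sosCone (r : ℝ) : (X - C (r : ℂ)) ^ 2 ∈ sosCone a b 1 :=
  Nq_X_sub_C_ofReal r ▸ Nq_mem_sosCone (natDegree_X_sub_C_le _)

/-- Each `X - r` with `r ∈ [a, b]` is a convex combination of `X - a` and `X - b`, so the product
of two of them is a nonnegative combination of `(X - a)²`, `(X - a)(X - b)` and `(X - b)²`. -/
lemma X_sub_C_mul_X_sub_C_mem_sosCone {r s : ℝ} (hr : r ∈ Set.Icc a b)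
    (hs : s ∈ Set.Icc a b) :
    (X - C (r : ℂ)) * (X - C (s : ℂ)) ∈ sosCone a b 1 := by
  have hab : a ≤ b := hr.1.trans hr.2
  rw [← segment_eq_Icc hab] at hr hs
  obtain ⟨θ₁, θ₂, hθ₁, hθ₂, hθ, rfl⟩ := hr
  obtain ⟨η₁, η₂, hη₁, hη₂, hη, rfl⟩ := hs
  have hθC : C (θ₁ : ℂ) + C (θ₂ : ℂ) = 1 := by
    rw [← C_add, ← Complex.ofReal_add, hθ]; simp
  have hηC : C (η₁ : ℂ) + C (η₂ : ℂ) = 1 := by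
    rw [← C_add, ← Complex.ofReal_add, hη]; simp
  have hexpand :
      (X - C ((θ₁ • a + θ₂ • b : ℝ) : ℂ)) * (X - C ((η₁ • a + η₂ • b : ℝ) : ℂ)) =
      C ((θ₁ * η₁ : ℝ) : ℂ) * (X - C (a : ℂ)) ^ 2 +
        C ((θ₁ * η₂ + θ₂ * η₁ : ℝ) : ℂ) * intervalWeight a b +
        C ((θ₂ * η₂ : ℝ) : ℂ) * (X - C (b : ℂ)) ^ 2 := by
    simp only [smul_eq_mul, Complex.ofReal_add, Complex.ofReal_mul, C_add, C_mul, intervalWeight]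
    linear_combination
      (X * (C (η₁ : ℂ) * C (a : ℂ) + C (η₂ : ℂ) * C (b : ℂ)) -
          (C (η₁ : ℂ) + C (η₂ : ℂ)) * X ^ 2) * hθC +
        (X * (C (θ₁ : ℂ) * C (a : ℂ) + C (θ₂ : ℂ) * C (b : ℂ)) - X ^ 2) * hηC
  rw [hexpand]
  refine add_mem (add_mem ?_ ?_) ?_
  · exact C_ofReal_mul_mem_sosCone (by positivity) (X_sub_C_ofReal_sq_mem_sosCone a)
  · exact C_ofReal_mul_mem_sosCone (by positivity) (intervalWeight_mem_sosCone a b)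
  · exact C_ofReal_mul_mem_sosCone (by positivity) (X_sub_C_ofReal_sq_mem_sosCone b)

lemma exists_sum_of_mem_sosCone {P : ℂ[X]} (hP : P ∈ sosCone a b n) :
    ∃ (m : ℕ) (flag : Fin m → Bool) (r : Fin m → ℂ[X]),
      (∀ i, if flag i then (r i).natDegree ≤ n else (r i).natDegree ≤ n - 1) ∧
      P = ∑ i, if flag i then Nq (r i) else intervalWeight a b * Nq (r i) := by
  obtain ⟨l, hl, rfl⟩ := AddSubmonoid.exists_list_of_mem_closure hP
  have hgen : ∀ i : Fin l.length, ∃ (flag : Bool) (f : ℂ[X]),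
      (if flag then f.natDegree ≤ n else f.natDegree ≤ n - 1) ∧
        l[i] = if flag then Nq f else intervalWeight a b * Nq f := by
    intro i
    obtain ⟨f, ⟨hf, he⟩ | ⟨hf, he⟩⟩ := hl _ (l.getElem_mem i.2)
    · exact ⟨true, f, hf, he⟩
    · exact ⟨false, f, by simp only [Bool.false_eq_true, if_false]; omega, he⟩
  choose flag r hdeg hr using hgen
  refine ⟨l.length, flag, r, hdeg, ?_⟩
  rw [← Fin.sum_univ_getElem]
  exact Finset.sum_congr rfl fun i _ => hr i

end sosCone

section roots

variable {a b : ℝ}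

lemma eval_nonpos_of_eventually_nhdsLT {g : ℝ[X]} {c : ℝ}
    (h : ∀ᶠ x in 𝓝[<] c, g.eval x ≤ 0) : g.eval c ≤ 0 :=
  le_of_tendsto ((g.continuous.tendsto c).mono_left nhdsWithin_le_nhds) h

lemma eval_nonneg_of_eventually_nhdsGT {g : ℝ[X]} {c : ℝ}
    (h : ∀ᶠ x in 𝓝[>] c, 0 ≤ g.eval x) : 0 ≤ g.eval c :=
  ge_of_tendsto ((g.continuous.tendsto c).mono_left nhdsWithin_le_nhds) h

lemma NonnegOutside.of_mul {p g : ℝ[X]} (h : NonnegOutside a b (p * g)) (hp0 : p ≠ 0)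
    (hp : NonnegOutside a b p) : NonnegOutside a b g := by
  have hdense : Dense {x | p.IsRoot x}ᶜ := (finite_setOfPred_isRoot hp0).countable.dense_compl ℝ
  have hsub : (Set.Icc a b)ᶜ ∩ {x | p.IsRoot x}ᶜ ⊆ {x | 0 ≤ g.eval x} := by
    rintro x ⟨hx, hroot⟩
    have hpg := h x hx
    rw [eval_mul] at hpg
    exact nonneg_of_mul_nonneg_right hpg ((hp x hx).lt_of_ne' hroot)
  intro x hx
  exact closure_minimal hsub (isClosed_le continuous_const g.continuous)
    (hdense.open_subset_closure_inter isClosed_Icc.isOpen_compl hx)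

lemma X_sub_C_sq_dvd_of_notMem_Icc {q : ℝ[X]} {r : ℝ} (hr : r ∉ Set.Icc a b)
    (hqr : q.IsRoot r) (hq : NonnegOutside a b q) : (X - C r) ^ 2 ∣ q := by
  obtain ⟨g, rfl⟩ := dvd_iff_isRoot.2 hqr
  have hnear : ∀ᶠ x in 𝓝 r, 0 ≤ (x - r) * g.eval x := by
    filter_upwards [isClosed_Icc.isOpen_compl.mem_nhds hr] with x hx
    simpa using hq x hx
  have hg : g.IsRoot r := le_antisymm
    (eval_nonpos_of_eventually_nhdsLT <| by
      filter_upwards [nhdsWithin_le_nhds hnear, self_mem_nhdsWithin] with x hx (hxr : x < r)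
      exact nonpos_of_mul_nonneg_right hx (sub_neg.2 hxr))
    (eval_nonneg_of_eventually_nhdsGT <| by
      filter_upwards [nhdsWithin_le_nhds hnear, self_mem_nhdsWithin] with x hx (hxr : r < x)
      exact nonneg_of_mul_nonneg_right hx (sub_pos.2 hxr))
  rw [sq]
  exact mul_dvd_mul_left _ (dvd_iff_isRoot.2 hg)

/-- The cofactor of a root in `[a, b]` is `≤ 0` left of `a` and `≥ 0` right of `b`, so by the
intermediate value theorem it has a root in `[a, b]` as well. -/
lemma exists_mem_Icc_X_sub_C_mul_dvd {q : ℝ[X]} {r : ℝ} (hr : r ∈ Set.Icc a b)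
    (hqr : q.IsRoot r) (hq : NonnegOutside a b q) :
    ∃ s ∈ Set.Icc a b, (X - C r) * (X - C s) ∣ q := by
  obtain ⟨g, rfl⟩ := dvd_iff_isRoot.2 hqr
  have hga : g.eval a ≤ 0 := eval_nonpos_of_eventually_nhdsLT <|
    eventually_nhdsWithin_of_forall fun x (hx : x < a) =>
      nonpos_of_mul_nonneg_right (by simpa using hq x fun h => hx.not_ge h.1)
        (by linarith [hr.1])
  have hgb : 0 ≤ g.eval b := eval_nonneg_of_eventually_nhdsGT <|
    eventually_nhdsWithin_of_forall fun x (hx : b < x) =>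
      nonneg_of_mul_nonneg_right (by simpa using hq x fun h => hx.not_ge h.2)
        (by linarith [hr.2])
  obtain ⟨s, hs, hgs⟩ :=
    intermediate_value_Icc (hr.1.trans hr.2) g.continuous.continuousOn ⟨hga, hgb⟩
  exact ⟨s, hs, mul_dvd_mul_left _ (dvd_iff_isRoot.2 hgs)⟩

lemma isAdmissibleQuadratic_X_sub_C_sq (r : ℝ) :
    IsAdmissibleQuadratic a b ((X - C r) ^ 2) := by
  refine ⟨by simp [natDegree_pow], ?_, fun x _ => ?_⟩
  · simpa using X_sub_C_ofReal_sq_mem_sosCone (a := a) (b := b) r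
  · simp only [eval_pow, eval_sub, eval_X, eval_C]
    positivity

lemma isAdmissibleQuadratic_X_sub_C_mul {r s : ℝ} (hr : r ∈ Set.Icc a b)
    (hs : s ∈ Set.Icc a b) : IsAdmissibleQuadratic a b ((X - C r) * (X - C s)) := by
  refine ⟨?_, by simpa using X_sub_C_mul_X_sub_C_mem_sosCone hr hs, fun x hx => ?_⟩
  · rw [natDegree_mul (X_sub_C_ne_zero r) (X_sub_C_ne_zero s), natDegree_X_sub_C,
      natDegree_X_sub_C]
  · rw [Set.mem_Icc, not_and_or, not_le, not_le] at hx
    simp only [eval_mul, eval_sub, eval_X, eval_C]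
    rcases hx with hx | hx
    · exact mul_nonneg_of_nonpos_of_nonpos (by linarith [hr.1]) (by linarith [hs.1])
    · exact mul_nonneg (by linarith [hr.2]) (by linarith [hs.2])

lemma isAdmissibleQuadratic_of_complex (z : ℂ) :
    IsAdmissibleQuadratic a b (X ^ 2 - C (2 * z.re) * X + C (‖z‖ ^ 2)) := by
  refine ⟨by compute_degree!, ?_, fun x _ => ?_⟩
  · have hmap : (X ^ 2 - C (2 * z.re) * X + C (‖z‖ ^ 2)).map (algebraMap ℝ ℂ) =
        Nq (X - C z) := by
      simp only [Nq, Polynomial.map_add, Polynomial.map_sub, Polynomial.map_mul,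
        Polynomial.map_pow, Polynomial.map_X, Polynomial.map_C, Complex.coe_algebraMap]
      rw [← Complex.add_conj, Complex.ofReal_pow, ← Complex.mul_conj']
      simp only [map_add, map_mul]
      ring
    rw [hmap]
    exact Nq_mem_sosCone (natDegree_X_sub_C_le _)
  · simp only [eval_add, eval_sub, eval_mul, eval_pow, eval_X, eval_C]
    rw [Complex.sq_norm, Complex.normSq_apply]
    nlinarith [sq_nonneg (x - z.re), sq_nonneg z.im]

lemma exists_isAdmissibleQuadratic_dvd {q : ℝ[X]} (hq : 0 < q.natDegree)
    (hpos : NonnegOutside a b q) : ∃ p, IsAdmissibleQuadratic a b p ∧ p ∣ q := by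
  obtain ⟨z, hz⟩ :=
    IsAlgClosed.exists_aeval_eq_zero ℂ q (natDegree_pos_iff_degree_pos.1 hq).ne'
  by_cases him : z.im = 0
  · have hr : q.IsRoot z.re := by
      rw [← Complex.re_add_im z, him, Complex.ofReal_zero, zero_mul, add_zero,
        ← Complex.coe_algebraMap, aeval_algebraMap_apply] at hz
      simpa using hz
    by_cases hmem : z.re ∈ Set.Icc a b
    · obtain ⟨s, hs, hdvd⟩ := exists_mem_Icc_X_sub_C_mul_dvd hmem hr hpos
      exact ⟨_, isAdmissibleQuadratic_X_sub_C_mul hmem hs, hdvd⟩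
    · exact ⟨_, isAdmissibleQuadratic_X_sub_C_sq _,
        X_sub_C_sq_dvd_of_notMem_Icc hmem hr hpos⟩
  · exact ⟨_, isAdmissibleQuadratic_of_complex z,
      quadratic_dvd_of_aeval_eq_zero_im_ne_zero q hz him⟩

theorem map_mem_sosCone_of_nonnegOutside :
    ∀ (n : ℕ) {q : ℝ[X]}, q.natDegree = 2 * n → NonnegOutside a b q →
      q.map (algebraMap ℝ ℂ) ∈ sosCone a b n
  | 0, q, hdeg, hq => by
    have hc := hq (b + 1) fun h => by linarith [h.2]
    rw [eq_C_of_natDegree_eq_zero hdeg, eval_C] at hc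
    rw [eq_C_of_natDegree_eq_zero hdeg, Polynomial.map_C]
    exact C_ofReal_mem_sosCone hc
  | n + 1, q, hdeg, hq => by
    obtain ⟨p, ⟨hp2, hpcone, hpnonneg⟩, g, rfl⟩ :=
      exists_isAdmissibleQuadratic_dvd (by omega) hq
    have hp0 : p ≠ 0 := by rintro rfl; simp at hp2
    have hg0 : g ≠ 0 := by rintro rfl; simp at hdeg
    have hgdeg : g.natDegree = 2 * n := by rw [natDegree_mul hp0 hg0, hp2] at hdeg; omega
    rw [Polynomial.map_mul, add_comm]
    exact sosCone_mul_mem hpcone (map_mem_sosCone_of_nonnegOutside n hgdeg (hq.of_mul hp0 hpnonneg))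

end roots

theorem even_degree_poly_decomposition_general (a b : ℝ)
    (q : Polynomial ℝ) (k : ℕ) (hk : q.natDegree = k) (heven : Even k)
    (hpos : ∀ x : ℝ, x ≤ a ∨ b ≤ x → 0 ≤ q.eval x) :
    ∃ (m : ℕ) (t : Fin m → ℝ) (flag : Fin m → Bool) (r : Fin m → Polynomial ℂ),
      (∀ i, 0 ≤ t i) ∧
      (∀ i, if flag i then (r i).natDegree ≤ k / 2 else (r i).natDegree ≤ k / 2 - 1) ∧
      q.map (algebraMap ℝ ℂ) =
        ∑ i, Polynomial.C ((t i : ℝ) : ℂ) *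
          (if flag i then Nq (r i)
            else (X - Polynomial.C ((a : ℝ) : ℂ)) * (X - Polynomial.C ((b : ℝ) : ℂ)) * Nq (r i)) := by
  obtain ⟨n, rfl⟩ := heven
  have hq : NonnegOutside a b q := fun x hx => hpos x <| by
    rw [Set.mem_Icc, not_and_or, not_le, not_le] at hx
    exact hx.imp le_of_lt le_of_lt
  obtain ⟨m, flag, r, hdeg, hsum⟩ :=
    exists_sum_of_mem_sosCone (map_mem_sosCone_of_nonnegOutside n (by omega) hq)
  refine ⟨m, fun _ => 1, flag, r, fun _ => zero_le_one,
    by rwa [show (n + n) / 2 = n by omega], ?_⟩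
  simpa [intervalWeight] using hsum

theorem even_degree_poly_decomposition (a b : ℝ) (hab : a ≤ b)
    (q : Polynomial ℝ) (k : ℕ) (hk : q.natDegree = k) (heven : Even k)
    (hpos : ∀ x : ℝ, x ≤ a ∨ b ≤ x → 0 ≤ q.eval x) :
    ∃ (m : ℕ) (t : Fin m → ℝ) (flag : Fin m → Bool) (r : Fin m → Polynomial ℂ),
      (∀ i, 0 ≤ t i) ∧
      (∀ i, if flag i then (r i).natDegree ≤ k / 2 else (r i).natDegree ≤ k / 2 - 1) ∧
      q.map (algebraMap ℝ ℂ) =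
        ∑ i, Polynomial.C ((t i : ℝ) : ℂ) *
          (if flag i then Nq (r i)
            else (X - Polynomial.C ((a : ℝ) : ℂ)) * (X - Polynomial.C ((b : ℝ) : ℂ)) * Nq (r i)) :=
  even_degree_poly_decomposition_general a b q k hk heven hpos
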